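/- arXiv:2408.06493 — 7 statements merged into one kernel-verified Lean document; each statement's English description precedes it below -/
import Mathlib

section
/- Fix n : ℕ and let X be the complex matrix indexed by bit strings (Fin n → Bool) with X z k = 1 if hammingDist z k = 1 and X z k = 0 otherwise (the n-qubit mixer Hamiltonian X = Σ_{j=1}^n σ_j^x expressed in the computational basis). Then for every real β and all bit strings z, k : Fin n → Bool, the (z,k) entry of Matrix.exp(−(i·β) • X) equals (cos β)^(n − hammingDist z k) · (−i · sin β)^(hammingDist z k). -/
/-!
Split off the first bit: under `Fin (n + 1) → Bool ≃ Bool × (Fin n → Bool)` the mixer on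
`n + 1` bits becomes the Kronecker sum `σˣ ⊗ 1 + 1 ⊗ X`, whose two summands commute, so the
exponential factors as `exp (θ σˣ) ⊗ exp (θ X)`. Since `σˣ` squares to one,
`exp (θ σˣ) = cosh θ + sinh θ σˣ`, which for `θ = -iβ` has diagonal entries `cos β` and
off-diagonal entries `-i sin β`. By induction each bit contributes `cos β` if `z` and `k` agree
there and `-i sin β` otherwise.
-/

open Complex Matrix NormedSpace Kronecker

theorem exp_smul_of_mul_self_eq_one {𝔸 : Type*} [NormedRing 𝔸] [NormedAlgebra ℂ 𝔸]
    [CompleteSpace 𝔸] {x : 𝔸} (hx : x * x = 1) (t : ℂ) :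
    exp (t • x) = cosh t • (1 : 𝔸) + sinh t • x := by
  have hx2 : x ^ 2 = 1 := by rw [sq, hx]
  rw [exp_eq_tsum ℂ]
  refine HasSum.tsum_eq (HasSum.even_add_odd ?_ ?_)
  · convert (hasSum_cosh t).smul_const (1 : 𝔸) using 2 with n
    rw [smul_pow, pow_mul x, hx2, one_pow, smul_smul, div_eq_inv_mul]
  · convert (hasSum_sinh t).smul_const x using 2 with n
    rw [smul_pow, pow_succ x, pow_mul x, hx2, one_pow, one_mul, smul_smul, div_eq_inv_mul]

theorem hammingDist_cons {n : ℕ} {β : Type*} [DecidableEq β] (a c : β) (b d : Fin n → β) :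
    hammingDist (Fin.cons a b : Fin (n + 1) → β) (Fin.cons c d) =
      (if a = c then 0 else 1) + hammingDist b d := by
  simp only [hammingDist, Finset.card_filter, Fin.sum_univ_succ, Fin.cons_zero, Fin.cons_succ,
    ne_eq, ite_not]

namespace Matrix

section KroneckerExp

variable {m n 𝕜 : Type*} [Fintype m] [DecidableEq m] [Fintype n] [DecidableEq n] [RCLike 𝕜]

open scoped Norms.Operator

theorem exp_reindex (e : m ≃ n) (A : Matrix m m 𝕜) :
    exp (reindex e e A) = reindex e e (exp A) :=
  (map_exp (reindexAlgEquiv ℚ 𝕜 e) (continuous_id.matrix_submatrix _ _) A).symm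

theorem exp_kronecker_one (A : Matrix m m 𝕜) :
    exp (A ⊗ₖ (1 : Matrix n n 𝕜)) = exp A ⊗ₖ (1 : Matrix n n 𝕜) := by
  rw [kronecker_one, exp_blockDiagonal, kronecker_one]
  congr 1
  funext i
  exact map_exp (Pi.evalRingHom (fun _ : n => Matrix m m 𝕜) i) (continuous_apply i) _

theorem exp_one_kronecker (B : Matrix n n 𝕜) :
    exp ((1 : Matrix m m 𝕜) ⊗ₖ B) = (1 : Matrix m m 𝕜) ⊗ₖ exp B := by
  rw [one_kronecker, ← kronecker_one, exp_reindex, exp_kronecker_one, kronecker_one,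
    ← one_kronecker]

theorem exp_kronecker_one_add_one_kronecker (A : Matrix m m 𝕜) (B : Matrix n n 𝕜) :
    exp (A ⊗ₖ (1 : Matrix n n 𝕜) + (1 : Matrix m m 𝕜) ⊗ₖ B) = exp A ⊗ₖ exp B := by
  have hAB : Commute (A ⊗ₖ (1 : Matrix n n 𝕜)) ((1 : Matrix m m 𝕜) ⊗ₖ B) := by
    simp only [Commute, SemiconjBy, ← mul_kronecker_mul, one_mul, mul_one]
  rw [exp_add_of_commute _ _ hAB, exp_kronecker_one, exp_one_kronecker, ← mul_kronecker_mul,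
    one_mul, mul_one]

end KroneckerExp

end Matrix

def pauliX (α : Type*) [Zero α] [One α] : Matrix Bool Bool α :=
  of fun a b => if a = b then 0 else 1

def mixer (α : Type*) [Zero α] [One α] (n : ℕ) : Matrix (Fin n → Bool) (Fin n → Bool) α :=
  of fun z k => if hammingDist z k = 1 then 1 else 0

theorem pauliX_mul_self (α : Type*) [NonAssocSemiring α] : pauliX α * pauliX α = 1 := by
  ext a b
  cases a <;> cases b <;> simp [pauliX, mul_apply]

theorem exp_smul_pauliX (t : ℂ) : exp (t • pauliX ℂ) = cosh t • 1 + sinh t • pauliX ℂ :=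
  open scoped Matrix.Norms.Operator in exp_smul_of_mul_self_eq_one (pauliX_mul_self ℂ) t

theorem exp_neg_I_mul_smul_pauliX_apply (β : ℝ) (a b : Bool) :
    exp ((-(I * β)) • pauliX ℂ) a b =
      if a = b then (Real.cos β : ℂ) else -(I * Real.sin β) := by
  have hcosh : cosh (-(I * β)) = Real.cos β := by
    rw [cosh_neg, mul_comm, cosh_mul_I, ofReal_cos]
  have hsinh : sinh (-(I * β)) = -(I * Real.sin β) := by
    rw [sinh_neg, mul_comm, sinh_mul_I, ofReal_sin, mul_comm]
  rw [exp_smul_pauliX, hcosh, hsinh]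
  cases a <;> cases b <;> simp [pauliX]

theorem mixer_zero (α : Type*) [Zero α] [One α] : mixer α 0 = 0 := by
  ext z k
  simp [mixer, Subsingleton.elim z k]

theorem reindex_mixer_succ (α : Type*) [Semiring α] (n : ℕ) :
    reindex (Fin.consEquiv fun _ => Bool).symm (Fin.consEquiv fun _ => Bool).symm
        (mixer α (n + 1)) =
      pauliX α ⊗ₖ (1 : Matrix (Fin n → Bool) (Fin n → Bool) α) +
        (1 : Matrix Bool Bool α) ⊗ₖ mixer α n := by
  ext ⟨a, b⟩ ⟨c, d⟩
  change (if hammingDist (Fin.cons a b : Fin (n + 1) → Bool) (Fin.cons c d) = 1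
      then (1 : α) else 0) =
    (if a = c then 0 else 1) * (1 : Matrix _ _ α) b d +
      (1 : Matrix _ _ α) a c * (if hammingDist b d = 1 then 1 else 0)
  rw [hammingDist_cons]
  by_cases hac : a = c <;> by_cases hbd : b = d <;> simp [hac, hbd, one_apply, hammingDist_eq_zero]

theorem exp_smul_mixer_succ_apply (t : ℂ) (n : ℕ) (a c : Bool) (b d : Fin n → Bool) :
    exp (t • mixer ℂ (n + 1)) (Fin.cons a b) (Fin.cons c d) =
      exp (t • pauliX ℂ) a c * exp (t • mixer ℂ n) b d := by
  set e := (Fin.consEquiv fun _ : Fin (n + 1) => Bool).symm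
  have hsplit : reindex e e (t • mixer ℂ (n + 1)) =
      (t • pauliX ℂ) ⊗ₖ (1 : Matrix (Fin n → Bool) (Fin n → Bool) ℂ) +
        (1 : Matrix Bool Bool ℂ) ⊗ₖ (t • mixer ℂ n) := by
    rw [show reindex e e (t • mixer ℂ (n + 1)) = t • reindex e e (mixer ℂ (n + 1)) from rfl,
      reindex_mixer_succ, smul_add, smul_kronecker, kronecker_smul]
  calc exp (t • mixer ℂ (n + 1)) (Fin.cons a b) (Fin.cons c d)
      = reindex e e (exp (t • mixer ℂ (n + 1))) (a, b) (c, d) := rfl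
    _ = _ := by rw [← exp_reindex, hsplit, exp_kronecker_one_add_one_kronecker]; rfl

theorem exp_mixer_entry (n : ℕ) (β : ℝ) (z k : Fin n → Bool) :
    (NormedSpace.exp ((-(Complex.I * β)) •
        (Matrix.of (fun z k : Fin n → Bool =>
          if hammingDist z k = 1 then (1 : ℂ) else 0)))) z k =
      (Real.cos β : ℂ) ^ (n - hammingDist z k) *
        (-(Complex.I * Real.sin β)) ^ (hammingDist z k) := by
  change exp ((-(I * β)) • mixer ℂ n) z k = _
  induction n with
  | zero =>
    simp [mixer_zero, Subsingleton.elim z k, one_apply]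
  | succ n ih =>
    obtain ⟨a, b, rfl⟩ : ∃ a b, Fin.cons a b = z := ⟨_, _, Fin.cons_self_tail z⟩
    obtain ⟨c, d, rfl⟩ : ∃ c d, Fin.cons c d = k := ⟨_, _, Fin.cons_self_tail k⟩
    have hbd : hammingDist b d ≤ n := by
      simpa using hammingDist_le_card_fintype (x := b) (y := d)
    rw [exp_smul_mixer_succ_apply, exp_neg_I_mul_smul_pauliX_apply, ih, hammingDist_cons]
    by_cases hac : a = c
    · simp only [hac, if_true, zero_add, Nat.sub_add_comm hbd, pow_succ]
      ring
    · simp only [hac, if_false, add_comm 1, Nat.add_sub_add_right, pow_succ]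
      ring
end

section
/- Fix n : ℕ and let X be the complex matrix indexed by bit strings (Fin n → Bool) with X z k = 1 if hammingDist z k = 1 and X z k = 0 otherwise. Then for every real β and all bit strings z, k : Fin n → Bool, the (z,k) entry of Matrix.exp(−(i·β) • X) equals the product over l : Fin n of the factor (cos β : ℂ) if z l = k l and (−i · sin β) if z l ≠ k l. (This is the tensor-product form of the mixer: exp(−iβX)|z⟩ = ⊗_{l=1}^n (cos β |z_l⟩ − i sin β |z_l ⊕ 1⟩).) -/
/-!
The mixer `X` is the adjacency matrix of the Hamming graph on `Fin n → Bool`, i.e. the sum over the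
sites `l` of the bit flip `σₗ = 1 ⊗ ⋯ ⊗ σ ⊗ ⋯ ⊗ 1` acting on site `l` only. These commute and
square to `1`, so `exp (-iβX) = ∏ₗ exp (-iβσₗ) = ∏ₗ (cos β - i sin β σₗ)`, and a product of
operators acting on distinct sites is the Kronecker product `⨂ₗ (cos β - i sin β σ)`.
-/

open Complex Matrix

theorem NormedSpace.exp_smul_of_mul_self_eq_one {𝔸 : Type*} [Ring 𝔸] [Algebra ℂ 𝔸]
    [TopologicalSpace 𝔸] [IsTopologicalRing 𝔸] [ContinuousSMul ℂ 𝔸] [T2Space 𝔸] {a : 𝔸}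
    (ha : a * a = 1) (z : ℂ) :
    NormedSpace.exp (z • a) = cosh z • (1 : 𝔸) + sinh z • a := by
  have pow_even (j : ℕ) : a ^ (2 * j) = 1 := by rw [pow_mul, sq, ha, one_pow]
  rw [NormedSpace.exp_eq_tsum ℂ]
  refine (HasSum.even_add_odd ?_ ?_).tsum_eq
  · convert (hasSum_cosh z).smul_const (1 : 𝔸) using 2 with j
    rw [smul_pow, pow_even, smul_smul, div_eq_inv_mul]
  · convert (hasSum_sinh z).smul_const a using 2 with j
    rw [smul_pow, pow_succ a, pow_even, one_mul, smul_smul, div_eq_inv_mul]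

namespace Matrix

variable {ι α R : Type*} [Fintype ι] [CommSemiring R]

def piKronecker (B : ι → Matrix α α R) : Matrix (ι → α) (ι → α) R :=
  of fun z k => ∏ i, B i (z i) (k i)

@[simp]
theorem piKronecker_apply (B : ι → Matrix α α R) (z k : ι → α) :
    piKronecker B z k = ∏ i, B i (z i) (k i) := rfl

theorem piKronecker_mul [DecidableEq ι] [Fintype α] (B C : ι → Matrix α α R) :
    piKronecker B * piKronecker C = piKronecker (B * C) := by
  ext z k
  simp only [piKronecker_apply, mul_apply, Pi.mul_apply, Finset.prod_univ_sum,
    Fintype.piFinset_univ, Finset.prod_mul_distrib]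

theorem piKronecker_one [DecidableEq α] : piKronecker (1 : ι → Matrix α α R) = 1 := by
  ext z k
  simp only [piKronecker_apply, Pi.one_apply, one_apply, Finset.prod_boole, Finset.mem_univ,
    true_implies, funext_iff]

def piKroneckerHom [DecidableEq ι] [Fintype α] [DecidableEq α] :
    (ι → Matrix α α R) →* Matrix (ι → α) (ι → α) R where
  toFun := piKronecker
  map_one' := piKronecker_one
  map_mul' B C := (piKronecker_mul B C).symm

theorem piKronecker_mulSingle_apply [DecidableEq ι] [DecidableEq α] (i : ι) (M : Matrix α α R)
    (z k : ι → α) :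
    piKronecker (Pi.mulSingle i M) z k = if ∀ j ≠ i, z j = k j then M (z i) (k i) else 0 := by
  have other_sites : ∏ j ∈ {i}ᶜ, (Pi.mulSingle i M : ι → Matrix α α R) j (z j) (k j) =
      if ∀ j ≠ i, z j = k j then 1 else 0 := by
    rw [Finset.prod_congr rfl fun j hj => by
        rw [Pi.mulSingle_eq_of_ne (by simpa using hj), one_apply],
      Finset.prod_boole]
    simp only [Finset.mem_compl, Finset.mem_singleton, ne_eq]
  rw [piKronecker_apply, Fintype.prod_eq_mul_prod_compl i, Pi.mulSingle_eq_same, other_sites,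
    mul_ite, mul_one, mul_zero]

def piKroneckerSingle [DecidableEq ι] [Fintype α] [DecidableEq α] (i : ι) :
    Matrix α α R →ₐ[R] Matrix (ι → α) (ι → α) R where
  toFun M := piKronecker (Pi.mulSingle i M)
  map_one' := by rw [Pi.mulSingle_one, piKronecker_one]
  map_mul' M N := by rw [Pi.mulSingle_mul, piKronecker_mul]
  map_zero' := by ext z k; simp only [piKronecker_mulSingle_apply, zero_apply, ite_self]
  map_add' M N := by
    ext z k
    simp only [add_apply, piKronecker_mulSingle_apply]
    split_ifs <;> simp
  commutes' r := by
    ext z k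
    simp only [piKronecker_mulSingle_apply, algebraMap_matrix_apply, funext_iff, ← ite_and]
    refine if_congr ⟨fun ⟨h, hi⟩ j => ?_, fun h => ⟨fun j _ => h j, h i⟩⟩ rfl rfl
    exact if hj : j = i then hj ▸ hi else h j hj

theorem piKroneckerSingle_apply [DecidableEq ι] [Fintype α] [DecidableEq α] (i : ι)
    (M : Matrix α α R) : piKroneckerSingle i M = piKronecker (Pi.mulSingle i M) := rfl

theorem commute_piKroneckerSingle [DecidableEq ι] [Fintype α] [DecidableEq α] {i j : ι}
    (hij : i ≠ j) (M N : Matrix α α R) :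
    Commute (piKroneckerSingle i M) (piKroneckerSingle j N) :=
  ((Pi.mulSingle_commute (f := fun _ : ι => Matrix α α R) hij M N).map piKroneckerHom :)

theorem piKronecker_eq_noncommProd [DecidableEq ι] [Fintype α] [DecidableEq α]
    (B : ι → Matrix α α R) :
    piKronecker B = Finset.univ.noncommProd (fun i => piKroneckerSingle i (B i))
      fun _ _ _ _ hij => commute_piKroneckerSingle hij _ _ := by
  conv_lhs => rw [← Finset.noncommProd_mulSingle B]
  exact Finset.map_noncommProd _ _ _ piKroneckerHom

theorem of_hammingDist_eq_one_eq_sum_piKroneckerSingle [DecidableEq ι] [Fintype α]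
    [DecidableEq α] :
    (of fun z k : ι → α => if hammingDist z k = 1 then (1 : R) else 0) =
      ∑ i, piKroneckerSingle i ((⊤ : SimpleGraph α).adjMatrix R) := by
  ext z k
  have single_site (i : ι) :
      (if ∀ j ≠ i, z j = k j then (if z i ≠ k i then (1 : R) else 0) else 0) =
        if ({j | z j ≠ k j} : Finset ι) = {i} then 1 else 0 := by
    rw [← ite_and]
    refine if_congr (Iff.trans ?_ Finset.eq_singleton_iff_unique_mem.symm) rfl rfl
    refine ⟨fun ⟨h, hi⟩ => ⟨by simpa using hi, fun j hj => ?_⟩,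
      fun ⟨hi, h⟩ => ⟨fun j hj => ?_, by simpa using hi⟩⟩
    · by_contra hji
      exact (Finset.mem_filter.mp hj).2 (h j hji)
    · by_contra hjk
      exact hj (h j (by simpa using hjk))
  simp only [of_apply, sum_apply, piKroneckerSingle_apply, piKronecker_mulSingle_apply,
    SimpleGraph.adjMatrix_apply, SimpleGraph.top_adj, single_site, hammingDist,
    Finset.card_eq_one]
  split_ifs with h
  · obtain ⟨a, ha⟩ := h
    simp only [ha, Finset.singleton_inj, Finset.sum_ite_eq, Finset.mem_univ, if_true]
  · exact (Finset.sum_eq_zero fun i _ => if_neg fun hi => h ⟨i, hi⟩).symm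

theorem exp_smul_piKroneckerSingle [DecidableEq ι] [Fintype α] [DecidableEq α]
    {A : Matrix α α ℂ} (hA : A * A = 1) (z : ℂ) (i : ι) :
    NormedSpace.exp (z • piKroneckerSingle i A) =
      piKroneckerSingle i (cosh z • 1 + sinh z • A) := by
  rw [NormedSpace.exp_smul_of_mul_self_eq_one (by rw [← map_mul, hA, map_one]), map_add,
    map_smul, map_smul, map_one]

theorem exp_smul_sum_piKroneckerSingle [DecidableEq ι] [Fintype α] [DecidableEq α]
    {A : Matrix α α ℂ} (hA : A * A = 1) (z : ℂ) :
    NormedSpace.exp (z • ∑ i : ι, piKroneckerSingle i A) =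
      piKronecker fun _ => cosh z • 1 + sinh z • A := by
  have hcomm : ((Finset.univ : Finset ι) : Set ι).Pairwise
      (Function.onFun Commute fun i => z • piKroneckerSingle i A) := fun i _ j _ hij =>
    ((commute_piKroneckerSingle hij A A).smul_left z).smul_right z
  rw [Finset.smul_sum, exp_sum_of_commute _ _ hcomm, piKronecker_eq_noncommProd]
  exact Finset.noncommProd_congr rfl (fun i _ => exp_smul_piKroneckerSingle hA z i) _

end Matrix

theorem SimpleGraph.adjMatrix_top_bool_mul_self {R : Type*} [NonAssocSemiring R] :
    (⊤ : SimpleGraph Bool).adjMatrix R * (⊤ : SimpleGraph Bool).adjMatrix R = 1 := by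
  ext a b
  cases a <;> cases b <;> simp [mul_apply]

theorem exp_mixer_entry_prod (n : ℕ) (β : ℝ) (z k : Fin n → Bool) :
    (NormedSpace.exp ((-(Complex.I * β)) •
        (Matrix.of (fun z k : Fin n → Bool =>
          if hammingDist z k = 1 then (1 : ℂ) else 0)))) z k =
      ∏ l : Fin n, (if z l = k l then (Real.cos β : ℂ) else -(Complex.I * Real.sin β)) := by
  have hcosh : cosh (-(I * β)) = Real.cos β := by
    rw [show -(I * β) = (-β : ℂ) * I by ring, cosh_mul_I, cos_neg, ofReal_cos]
  have hsinh : sinh (-(I * β)) = -(I * Real.sin β) := by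
    rw [show -(I * β) = (-β : ℂ) * I by ring, sinh_mul_I, sin_neg, ofReal_sin]
    ring
  rw [of_hammingDist_eq_one_eq_sum_piKroneckerSingle,
    exp_smul_sum_piKroneckerSingle SimpleGraph.adjMatrix_top_bool_mul_self, hcosh, hsinh,
    piKronecker_apply]
  refine Finset.prod_congr rfl fun l _ => ?_
  by_cases h : z l = k l <;> simp [h]
end

section
/- Fix n : ℕ, real angles β, γ, a finite set T of bit strings (Fin n → Bool), and k : Fin n → Bool. Then exp(−i·γ) · Σ_{z ∈ T} f(β,z,k) + Σ_{z ∉ T} f(β,z,k) = Σ_{d=0}^{n} ( (#_d(k) : ℂ) · (exp(−i·γ) − 1) + (n.choose d : ℂ) ) · f_n(β,d), where the left-hand second sum runs over all bit strings not in T. -/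
open Complex

lemma hamming_le {n : ℕ} (z k : Fin n → Bool) : hammingDist z k ≤ n := by
  simpa using hammingDist_le_card_fintype (x := z) (y := k)

lemma sum_by_dist {n : ℕ} (k : Fin n → Bool) (S : Finset (Fin n → Bool))
    (g : ℕ → ℂ) :
    ∑ z ∈ S, g (hammingDist z k) =
      ∑ d ∈ Finset.range (n + 1),
        ((S.filter (fun z => hammingDist z k = d)).card : ℂ) * g d := by
  rw [← Finset.sum_fiberwise_of_maps_to'
      (fun z _ => Finset.mem_range.mpr (Nat.lt_succ_of_le (hamming_le z k))) g]
  exact Finset.sum_congr rfl fun d _ => by rw [Finset.sum_const, nsmul_eq_mul]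

lemma card_dist {n : ℕ} (k : Fin n → Bool) (d : ℕ) :
    (Finset.univ.filter (fun z : Fin n → Bool => hammingDist z k = d)).card
      = n.choose d := by
  rw [show n.choose d = (Finset.powersetCard d (Finset.univ : Finset (Fin n))).card by
      rw [Finset.card_powersetCard, Finset.card_univ, Fintype.card_fin]]
  · apply Finset.card_bij' (fun z _ => Finset.univ.filter fun i => z i ≠ k i)
      (fun s _ => fun i => if i ∈ s then !(k i) else k i)
    · intro z hz
      simp only [Finset.mem_filter, Finset.mem_univ, true_and] at hz
      simp only [Finset.mem_powersetCard]
      exact ⟨Finset.subset_univ _, hz⟩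
    · intro s hs
      simp only [Finset.mem_powersetCard] at hs
      simp only [Finset.mem_filter, Finset.mem_univ, true_and]
      rw [show hammingDist (fun i => if i ∈ s then !(k i) else k i) k =
          (Finset.univ.filter fun i => (if i ∈ s then !(k i) else k i) ≠ k i).card
          from rfl]
      rw [← hs.2]
      congr 1
      ext i
      by_cases h : i ∈ s <;> simp [h]
    · intro z hz
      funext i
      by_cases h : z i = k i <;>
        simp only [Finset.mem_filter, Finset.mem_univ, true_and, h, ite_true,
          ite_false, not_true, not_false_iff, if_neg, if_pos] <;>
      cases hz1 : z i <;> cases hz2 : k i <;> simp_all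
    · intro s hs
      ext i
      by_cases h : i ∈ s <;> simp [h] <;> cases k i <;> simp

theorem ck_reorder (n : ℕ) (β γ : ℝ) (T : Finset (Fin n → Bool))
    (k : Fin n → Bool) :
    let f : ℝ → (Fin n → Bool) → (Fin n → Bool) → ℂ := fun β z k =>
      (Real.cos β : ℂ) ^ (n - hammingDist z k) *
        (-(Complex.I * Real.sin β)) ^ (hammingDist z k)
    let fn : ℝ → ℕ → ℂ := fun β d =>
      (Real.cos β : ℂ) ^ (n - d) * (-(Complex.I * Real.sin β)) ^ d
    let count : ℕ → ℕ := fun d => (T.filter (fun z => hammingDist z k = d)).card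
    Complex.exp (-(Complex.I * γ)) * ∑ z ∈ T, f β z k + ∑ z ∈ Tᶜ, f β z k =
      ∑ d ∈ Finset.range (n + 1),
        ((count d : ℂ) * (Complex.exp (-(Complex.I * γ)) - 1) + (n.choose d : ℂ)) *
          fn β d := by
  intro f fn count
  have hf : ∀ z, f β z k = fn β (hammingDist z k) := fun z => rfl
  have hT : ∑ z ∈ T, f β z k =
      ∑ d ∈ Finset.range (n + 1), (count d : ℂ) * fn β d := by
    simp only [hf]; exact sum_by_dist k T (fn β)
  have hU : ∑ z ∈ (Finset.univ : Finset (Fin n → Bool)), f β z k =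
      ∑ d ∈ Finset.range (n + 1), (n.choose d : ℂ) * fn β d := by
    simp only [hf]
    rw [sum_by_dist k Finset.univ (fn β)]
    exact Finset.sum_congr rfl fun d _ => by rw [card_dist]
  have hC : ∑ z ∈ Tᶜ, f β z k =
      (∑ z ∈ (Finset.univ : Finset (Fin n → Bool)), f β z k) - ∑ z ∈ T, f β z k := by
    rw [eq_sub_iff_add_eq, Finset.sum_compl_add_sum]
  rw [hC, hT, hU, ← Finset.sum_sub_distrib, Finset.mul_sum, ← Finset.sum_add_distrib]
  refine Finset.sum_congr rfl fun d _ => ?_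
  ring
end

section
/- Fix n : ℕ, real angles β, γ, and a nonempty finite set T of bit strings (Fin n → Bool). Define the instance means m_d := (1/|T|)·Σ_{k ∈ T} #_d(k) and m_{d₁,d₂} := (1/|T|)·Σ_{k ∈ T} #_{d₁}(k)·#_{d₂}(k) (real numbers). Then the mean (1/|T|)·Σ_{k ∈ T} Complex.normSq(c_k(β,γ)), viewed as a complex number, equals Σ_{d₁=0}^{n} Σ_{d₂=0}^{n} w_{d₁,d₂}(γ) · f_n(β,d₁) · conj(f_n(β,d₂)), where w_{d₁,d₂}(γ) := m_{d₁,d₂}·(exp(−iγ)−1)·(exp(iγ)−1) + m_{d₁}·(exp(−iγ)−1)·(n.choose d₂) + m_{d₂}·(exp(iγ)−1)·(n.choose d₁) + (n.choose d₁)·(n.choose d₂), with real quantities coerced to ℂ and conj denoting complex conjugation. -/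
open Complex

theorem mean_normSq_ck (n : ℕ) (β γ : ℝ) (T : Finset (Fin n → Bool))
    (hT : T.Nonempty) :
    let fn : ℝ → ℕ → ℂ := fun β d =>
      (Real.cos β : ℂ) ^ (n - d) * (-(Complex.I * Real.sin β)) ^ d
    let count : (Fin n → Bool) → ℕ → ℕ := fun k d =>
      (T.filter (fun z => hammingDist z k = d)).card
    let c : (Fin n → Bool) → ℂ := fun k =>
      ∑ d ∈ Finset.range (n + 1),
        ((count k d : ℂ) * (Complex.exp (-(Complex.I * γ)) - 1) + (n.choose d : ℂ)) *
          fn β d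
    let m₁ : ℕ → ℝ := fun d => (1 / T.card : ℝ) * ∑ k ∈ T, (count k d : ℝ)
    let m₂ : ℕ → ℕ → ℝ := fun d₁ d₂ =>
      (1 / T.card : ℝ) * ∑ k ∈ T, (count k d₁ : ℝ) * (count k d₂ : ℝ)
    let w : ℕ → ℕ → ℂ := fun d₁ d₂ =>
      (m₂ d₁ d₂ : ℂ) * (Complex.exp (-(Complex.I * γ)) - 1) *
          (Complex.exp (Complex.I * γ) - 1) +
        (m₁ d₁ : ℂ) * (Complex.exp (-(Complex.I * γ)) - 1) * (n.choose d₂ : ℂ) +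
        (m₁ d₂ : ℂ) * (Complex.exp (Complex.I * γ) - 1) * (n.choose d₁ : ℂ) +
        (n.choose d₁ : ℂ) * (n.choose d₂ : ℂ)
    (((1 / T.card : ℝ) * ∑ k ∈ T, Complex.normSq (c k) : ℝ) : ℂ) =
      ∑ d₁ ∈ Finset.range (n + 1), ∑ d₂ ∈ Finset.range (n + 1),
        w d₁ d₂ * fn β d₁ * (starRingEnd ℂ) (fn β d₂) := by
  intro fn count c m₁ m₂ w
  have hN : (T.card : ℂ) ≠ 0 := by
    exact_mod_cast Nat.cast_ne_zero.mpr (Finset.card_ne_zero.mpr hT)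
  set e : ℂ := Complex.exp (-(Complex.I * γ)) - 1 with he
  have hconj : (starRingEnd ℂ) e = Complex.exp (Complex.I * γ) - 1 := by
    rw [he, map_sub, map_one, ← Complex.exp_conj, map_neg, map_mul,
      Complex.conj_I, Complex.conj_ofReal]
    ring_nf
  set ec : ℂ := Complex.exp (Complex.I * γ) - 1 with hec
  -- Rewrite LHS
  have hns : ∀ k, ((Complex.normSq (c k) : ℝ) : ℂ) = c k * (starRingEnd ℂ) (c k) :=
    fun k => (Complex.mul_conj (c k)).symm
  push_cast
  rw [one_div]
  calc (↑T.card)⁻¹ * ∑ k ∈ T, ((Complex.normSq (c k) : ℝ) : ℂ)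
      = (↑T.card)⁻¹ * ∑ k ∈ T, ∑ d₁ ∈ Finset.range (n+1), ∑ d₂ ∈ Finset.range (n+1),
          (((count k d₁ : ℂ) * e + (n.choose d₁ : ℂ)) * fn β d₁) *
          (starRingEnd ℂ) (((count k d₂ : ℂ) * e + (n.choose d₂ : ℂ)) * fn β d₂) := by
        congr 1
        refine Finset.sum_congr rfl fun k _ => ?_
        rw [hns k]
        show c k * (starRingEnd ℂ) (c k) = _
        rw [show c k = ∑ d ∈ Finset.range (n+1),
            ((count k d : ℂ) * e + (n.choose d : ℂ)) * fn β d from rfl,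
          map_sum, Finset.sum_mul_sum]
    _ = ∑ d₁ ∈ Finset.range (n+1), ∑ d₂ ∈ Finset.range (n+1),
          ((↑T.card)⁻¹ * ∑ k ∈ T,
            (((count k d₁ : ℂ) * e + (n.choose d₁ : ℂ)) * fn β d₁) *
            (starRingEnd ℂ) (((count k d₂ : ℂ) * e + (n.choose d₂ : ℂ)) * fn β d₂)) := by
        rw [Finset.sum_comm]
        rw [Finset.mul_sum]
        refine Finset.sum_congr rfl fun d₁ _ => ?_
        rw [Finset.sum_comm, Finset.mul_sum]
    _ = _ := by
        refine Finset.sum_congr rfl fun d₁ _ => Finset.sum_congr rfl fun d₂ _ => ?_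
        have hexp : ∀ k : Fin n → Bool,
            (((count k d₁ : ℂ) * e + (n.choose d₁ : ℂ)) * fn β d₁) *
            (starRingEnd ℂ) (((count k d₂ : ℂ) * e + (n.choose d₂ : ℂ)) * fn β d₂)
            = ((count k d₁ : ℂ) * (count k d₂ : ℂ) * (e * ec)
              + (count k d₁ : ℂ) * (e * (n.choose d₂ : ℂ))
              + (count k d₂ : ℂ) * (ec * (n.choose d₁ : ℂ))
              + (n.choose d₁ : ℂ) * (n.choose d₂ : ℂ))
              * (fn β d₁ * (starRingEnd ℂ) (fn β d₂)) := by
          intro k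
          rw [map_mul, map_add, map_mul, hconj, Complex.conj_natCast,
            Complex.conj_natCast]
          ring
        set F : ℂ := fn β d₁ * (starRingEnd ℂ) (fn β d₂) with hF
        have hsplit : ∑ k ∈ T,
            (((count k d₁ : ℂ) * e + (n.choose d₁ : ℂ)) * fn β d₁) *
            (starRingEnd ℂ) (((count k d₂ : ℂ) * e + (n.choose d₂ : ℂ)) * fn β d₂)
            = (e * ec * F) * (∑ k ∈ T, (count k d₁ : ℂ) * (count k d₂ : ℂ))
              + (e * (n.choose d₂ : ℂ) * F) * (∑ k ∈ T, (count k d₁ : ℂ))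
              + (ec * (n.choose d₁ : ℂ) * F) * (∑ k ∈ T, (count k d₂ : ℂ))
              + (T.card : ℂ) * ((n.choose d₁ : ℂ) * (n.choose d₂ : ℂ) * F) := by
          rw [Finset.sum_congr rfl fun k _ => (hexp k).trans (by ring :
            ((count k d₁ : ℂ) * (count k d₂ : ℂ) * (e * ec)
              + (count k d₁ : ℂ) * (e * (n.choose d₂ : ℂ))
              + (count k d₂ : ℂ) * (ec * (n.choose d₁ : ℂ))
              + (n.choose d₁ : ℂ) * (n.choose d₂ : ℂ)) * F
            = (e * ec * F) * ((count k d₁ : ℂ) * (count k d₂ : ℂ))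
              + (e * (n.choose d₂ : ℂ) * F) * (count k d₁ : ℂ)
              + (ec * (n.choose d₁ : ℂ) * F) * (count k d₂ : ℂ)
              + ((n.choose d₁ : ℂ) * (n.choose d₂ : ℂ) * F))]
          simp only [Finset.sum_add_distrib, ← Finset.mul_sum, Finset.sum_const,
            nsmul_eq_mul]
          ring
        rw [hsplit]
        rw [show w d₁ d₂ = (m₂ d₁ d₂ : ℂ) * e * ec + (m₁ d₁ : ℂ) * e * (n.choose d₂ : ℂ)
          + (m₁ d₂ : ℂ) * ec * (n.choose d₁ : ℂ) + (n.choose d₁ : ℂ) * (n.choose d₂ : ℂ) from rfl]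
        have hm2 : (m₂ d₁ d₂ : ℂ) = (↑T.card)⁻¹ * ∑ k ∈ T, (count k d₁ : ℂ) * (count k d₂ : ℂ) := by
          show ((_ : ℝ) : ℂ) = _
          push_cast [m₂]
          ring
        have hm1 : ∀ d, (m₁ d : ℂ) = (↑T.card)⁻¹ * ∑ k ∈ T, (count k d : ℂ) := by
          intro d
          show ((_ : ℝ) : ℂ) = _
          push_cast [m₁]
          ring
        rw [hm2, hm1 d₁, hm1 d₂]
        field_simp
        ring
end

section
/- (Ancilla-independent constraint Hamiltonian from a verifier circuit.) Fix n, m : ℕ with m ≥ 1, a verifier function v : (Fin n → Bool) → Bool, and a unitary complex matrix V indexed by pairs (Fin n → Bool) × (Fin m → Bool) such that for every z : Fin n → Bool there exists w : Fin m → Bool with w 0 = v z and V *ᵥ e_{(z, 0)} = e_{(z, w)}, where 0 denotes the all-false ancilla string and e_x is the standard basis vector at index x. Let P be the diagonal matrix with entry 1 at each index (z, a) with a 0 = true and entry 0 otherwise (the projector 1^{⊗n} ⊗ |1⟩⟨1| ⊗ 1^{⊗(m−1)}), and define C := Vᴴ * P * V. Then for every z : Fin n → Bool: C *ᵥ e_{(z,0)}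 = e_{(z,0)} if v z = true, and C *ᵥ e_{(z,0)} = 0 if v z = false. -/
open Matrix

theorem verifier_constraint_hamiltonian (n m : ℕ) (hm : 0 < m)
    (v : (Fin n → Bool) → Bool)
    (V : Matrix ((Fin n → Bool) × (Fin m → Bool)) ((Fin n → Bool) × (Fin m → Bool)) ℂ)
    (hV : Vᴴ * V = 1)
    (hver : ∀ z : Fin n → Bool, ∃ w : Fin m → Bool,
      w ⟨0, hm⟩ = v z ∧
      V *ᵥ (Pi.single (z, fun _ => false) 1 : ((Fin n → Bool) × (Fin m → Bool)) → ℂ) =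
        Pi.single (z, w) 1) :
    let P : Matrix ((Fin n → Bool) × (Fin m → Bool)) ((Fin n → Bool) × (Fin m → Bool)) ℂ :=
      Matrix.diagonal (fun p => if p.2 ⟨0, hm⟩ = true then 1 else 0)
    let C := Vᴴ * P * V
    ∀ z : Fin n → Bool,
      (v z = true →
        C *ᵥ (Pi.single (z, fun _ => false) 1 : ((Fin n → Bool) × (Fin m → Bool)) → ℂ) =
          Pi.single (z, fun _ => false) 1) ∧
      (v z = false →
        C *ᵥ (Pi.single (z, fun _ => false) 1 : ((Fin n → Bool) × (Fin m → Bool)) → ℂ) =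
          0) := by
  intro P C z
  obtain ⟨w, hw0, hVe⟩ := hver z
  have key : C *ᵥ (Pi.single (z, fun _ => false) 1 : ((Fin n → Bool) × (Fin m → Bool)) → ℂ)
      = Vᴴ *ᵥ (P *ᵥ (Pi.single (z, w) 1)) := by
    simp only [C, ← mulVec_mulVec, hVe]
  have hdiag : P *ᵥ (Pi.single (z, w) 1 : ((Fin n → Bool) × (Fin m → Bool)) → ℂ)
      = Pi.single (z, w) (if w ⟨0, hm⟩ = true then 1 else 0) := by
    rw [show P = Matrix.diagonal (fun p => if p.2 ⟨0, hm⟩ = true then 1 else 0) from rfl,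
      diagonal_mulVec_single, mul_one]
  constructor
  · intro hvz
    rw [key, hdiag, hw0, hvz, if_pos rfl, ← hVe, mulVec_mulVec, hV, one_mulVec]
  · intro hvz
    rw [key, hdiag, hw0, hvz, if_neg (by simp), Pi.single_zero, mulVec_zero]
end

section
/- (Uniform target sampling, single-distance counts.) Fix n ≥ 1, a bit string k : Fin n → Bool, and naturals d, t, x with 1 ≤ d ≤ n and x < t. Then the number of finite sets T of bit strings (Fin n → Bool) with |T| = t, k ∈ T, and |{z ∈ T | hammingDist z k = d}| = x equals (n.choose d).choose x * (2^n − 1 − n.choose d).choose (t − 1 − x). -/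
/-!
A set `T` containing `k` is determined by `T.erase k`, a `(t - 1)`-subset of the other `2 ^ n - 1`
strings. Such a subset splits into its part on the Hamming sphere of radius `d` around `k`, which
has `n.choose d` points and misses `k` because `d ≥ 1`, and its part off the sphere; these two parts
are chosen independently, giving the product of two binomial coefficients.
-/

open Finset

namespace Finset

variable {α : Type*} [DecidableEq α]

theorem card_filter_powersetCard_card_filter_eq (s : Finset α) (p : α → Prop) [DecidablePred p]
    {m x : ℕ} (hxm : x ≤ m) :
    #{U ∈ s.powersetCard m | #{a ∈ U | p a} = x} =
      (#{a ∈ s | p a}).choose x * (#{a ∈ s | ¬ p a}).choose (m - x) := by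
  have split_union {A B : Finset α} (hA : A ⊆ {a ∈ s | p a}) (hB : B ⊆ {a ∈ s | ¬ p a}) :
      {a ∈ A ∪ B | p a} = A ∧ {a ∈ A ∪ B | ¬ p a} = B := by
    have hpA : ∀ a ∈ A, p a := fun a ha ↦ (mem_filter.1 (hA ha)).2
    have hpB : ∀ a ∈ B, ¬ p a := fun a ha ↦ (mem_filter.1 (hB ha)).2
    rw [filter_union, filter_union, filter_true_of_mem hpA, filter_false_of_mem hpB,
      filter_true_of_mem hpB, filter_false_of_mem fun a ha ↦ not_not.2 (hpA a ha)]
    simp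
  rw [← card_powersetCard, ← card_powersetCard, ← card_product]
  refine card_nbij' (fun U ↦ ({a ∈ U | p a}, {a ∈ U | ¬ p a})) (fun B ↦ B.1 ∪ B.2)
    ?_ ?_ (fun U _ ↦ filter_union_filter_not_eq p U) ?_
  · intro U hU
    simp only [coe_filter, mem_powersetCard, Set.mem_ofPred_eq, mem_coe, mem_product] at hU ⊢
    obtain ⟨⟨hUs, rfl⟩, rfl⟩ := hU
    have := card_filter_add_card_filter_not (s := U) (fun a ↦ p a)
    exact ⟨⟨filter_subset_filter _ hUs, rfl⟩, filter_subset_filter _ hUs, by omega⟩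
  · rintro ⟨A, B⟩ hAB
    simp only [coe_filter, mem_powersetCard, Set.mem_ofPred_eq, mem_coe, mem_product] at hAB ⊢
    obtain ⟨⟨hA, rfl⟩, hB, hBx⟩ := hAB
    have hdisj : Disjoint A B := (disjoint_filter_filter_not s s p).mono hA hB
    refine ⟨⟨union_subset (hA.trans (filter_subset _ _)) (hB.trans (filter_subset _ _)), ?_⟩,
      by rw [(split_union hA hB).1]⟩
    rw [card_union_of_disjoint hdisj]
    omega
  · rintro ⟨A, B⟩ hAB
    simp only [mem_powersetCard, mem_coe, mem_product] at hAB
    exact Prod.ext (split_union hAB.1.1 hAB.2.1).1 (split_union hAB.1.1 hAB.2.1).2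

theorem card_filter_card_eq_and_mem_and_card_filter_eq [Fintype α] (p : α → Prop)
    [DecidablePred p] {a : α} (ha : ¬ p a) {t x : ℕ} (hx : x < t) :
    #{T : Finset α | #T = t ∧ a ∈ T ∧ #{z ∈ T | p z} = x} =
      (#{z | p z}).choose x * (Fintype.card α - 1 - #{z | p z}).choose (t - 1 - x) := by
  obtain ⟨t, rfl⟩ : ∃ t', t = t' + 1 := ⟨t - 1, by omega⟩
  have erase_bij : #{T : Finset α | #T = t + 1 ∧ a ∈ T ∧ #{z ∈ T | p z} = x} =
      #{U ∈ (univ.erase a).powersetCard t | #{z ∈ U | p z} = x} := by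
    have filter_insert_eq (U : Finset α) : {z ∈ insert a U | p z} = {z ∈ U | p z} := by
      rw [filter_insert, if_neg ha]
    refine card_nbij' (·.erase a) (insert a) ?_ ?_ ?_ ?_
    · intro T hT
      obtain ⟨-, hT, haT, hTx⟩ := mem_filter.1 (mem_coe.1 hT)
      refine mem_filter.2 ⟨mem_powersetCard.2 ⟨erase_subset_erase a (subset_univ T), ?_⟩, ?_⟩
      · rw [card_erase_of_mem haT, hT, Nat.add_sub_cancel]
      · rw [← filter_insert_eq, insert_erase haT, hTx]
    · intro U hU
      simp only [coe_filter, mem_powersetCard, Set.mem_ofPred_eq] at hU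
      obtain ⟨⟨hUa, hU⟩, hUx⟩ := hU
      have haU : a ∉ U := notMem_mono hUa (notMem_erase a univ)
      simp only [coe_filter, mem_univ, true_and, Set.mem_ofPred_eq]
      exact ⟨by rw [card_insert_of_notMem haU, hU], mem_insert_self a U,
        by rw [filter_insert_eq, hUx]⟩
    · intro T hT
      exact insert_erase (mem_filter.1 (mem_coe.1 hT)).2.2.1
    · intro U hU
      exact erase_insert <|
        notMem_mono (mem_powersetCard.1 (mem_filter.1 hU).1).1 (notMem_erase a univ)
  have filter_erase_eq : {z ∈ univ.erase a | p z} = ({z | p z} : Finset α) := by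
    rw [filter_erase, erase_eq_of_notMem (by simpa using ha)]
  have card_compl :
      #{z ∈ univ.erase a | ¬ p z} = Fintype.card α - 1 - #({z | p z} : Finset α) := by
    have := card_filter_add_card_filter_not (s := univ.erase a) (fun z ↦ p z)
    rw [filter_erase_eq, card_erase_of_mem (mem_univ a), card_univ] at this
    omega
  rw [erase_bij, card_filter_powersetCard_card_filter_eq _ _ (by omega), filter_erase_eq,
    card_compl, Nat.add_sub_cancel]

end Finset

theorem card_filter_hammingDist_eq {ι : Type*} [Fintype ι] [DecidableEq ι] (k : ι → Bool)
    (d : ℕ) :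
    #{z : ι → Bool | hammingDist z k = d} = (Fintype.card ι).choose d := by
  rw [← card_univ, ← card_powersetCard]
  refine card_nbij' (fun z ↦ ({i | z i ≠ k i} : Finset ι))
    (fun s i ↦ if i ∈ s then !k i else k i) ?_ ?_ ?_ ?_
  · intro z hz
    simpa [hammingDist] using hz
  · intro s hs
    simp only [mem_coe, mem_powersetCard, subset_univ, true_and] at hs
    simp only [coe_filter, mem_univ, true_and, Set.mem_ofPred_eq, hammingDist]
    rw [← hs]
    congr 1
    ext i
    by_cases h : i ∈ s <;> simp [h]
  · intro z _
    funext i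
    cases hzi : z i <;> cases hki : k i <;> simp [hzi, hki]
  · intro s _
    ext i
    by_cases h : i ∈ s <;> simp [h]

theorem uniform_sampling_single_count_general (n : ℕ) (k : Fin n → Bool)
    (d t x : ℕ) (hd1 : 1 ≤ d) (hx : x < t) :
    (Finset.univ.filter (fun T : Finset (Fin n → Bool) =>
        T.card = t ∧ k ∈ T ∧
        (T.filter (fun z => hammingDist z k = d)).card = x)).card =
      (n.choose d).choose x * (2 ^ n - 1 - n.choose d).choose (t - 1 - x) := by
  have hk : hammingDist k k ≠ d := by rw [hammingDist_self]; omega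
  rw [card_filter_card_eq_and_mem_and_card_filter_eq (fun z ↦ hammingDist z k = d) hk hx,
    card_filter_hammingDist_eq, Fintype.card_fin, Fintype.card_fun, Fintype.card_bool,
    Fintype.card_fin]

theorem uniform_sampling_single_count (n : ℕ) (hn : 1 ≤ n) (k : Fin n → Bool)
    (d t x : ℕ) (hd1 : 1 ≤ d) (hdn : d ≤ n) (hx : x < t) :
    (Finset.univ.filter (fun T : Finset (Fin n → Bool) =>
        T.card = t ∧ k ∈ T ∧
        (T.filter (fun z => hammingDist z k = d)).card = x)).card =
      (n.choose d).choose x * (2 ^ n - 1 - n.choose d).choose (t - 1 - x) :=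
  uniform_sampling_single_count_general n k d t x hd1 hx
end

section
/- (Combined k-Clique constraint Hamiltonian.) Fix n, m : ℕ with n < 2^m, a simple graph G on Fin n with decidable adjacency, and k : ℕ with k ≤ n. Let C_cliques be the product over all pairs of distinct non-adjacent vertices i ≠ j of (1 − P_{ij}), where P_{ij} is the diagonal matrix on ℂ^(Fin n → Bool) whose (z,z) entry is 1 iff z i = true and z j = true. Let π be the bijection on (Fin n → Bool) × ZMod (2^m) sending (z,y) to (z, y + w_H(z)), D_H its permutation matrix, and P_k the diagonal matrix with entry 1 at indices (z,a) with a = (k : ZMod (2^m)). Define C := (D_Hᴴ * P_k * D_H) * (C_cliques ⊗ 1), where ⊗ is the Kronecker product with the identity on ℂ^(ZMod (2^m)). Then for every z : Fin n → Bool: C *ᵥ e_{(z,0)} = e_{(z,0)} if {i | z i = true} is a clique in G of cardinality k, and C *ᵥ e_{(z,0)} = 0 otherwise. -/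
open Matrix Kronecker

/-! Every factor of `C` is diagonal in the computational basis: the clique part is a product of
commuting diagonal projectors, and conjugating `Pk` by the permutation matrix of the injective
shear `π` gives the diagonal matrix of `Pk ∘ π`. Hence `C` scales `e_(z,0)` by
`[w_H(z) ≡ k mod 2^m] · [z is a clique]`, and `w_H(z), k ≤ n < 2^m` turns the congruence into an
equality. -/

theorem Matrix.noncommProd_eq_diagonal_prod {ι n R : Type*} [Fintype n] [DecidableEq n]
    [CommSemiring R] (s : Finset ι) (f : ι → Matrix n n R) (d : ι → n → R)
    (hf : ∀ i ∈ s, f i = diagonal (d i)) (comm) :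
    s.noncommProd f comm = diagonal (∏ i ∈ s, d i) := by
  rw [Finset.noncommProd_congr (g := fun i => diagonalRingHom n R (d i)) rfl hf,
    ← Finset.map_noncommProd _ _ fun _ _ _ _ _ => Commute.all _ _, Finset.noncommProd_eq_prod]
  rfl

theorem Matrix.conjTranspose_mul_diagonal_mul_of_injective {α β R : Type*} [Fintype β]
    [DecidableEq α] [DecidableEq β] [Semiring R] [StarRing R] {f : α → β}
    (hf : Function.Injective f) (d : β → R) :
    (of fun x y => if x = f y then (1 : R) else 0)ᴴ * diagonal d *
        of (fun x y => if x = f y then (1 : R) else 0) = diagonal (d ∘ f) := by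
  ext x y
  by_cases hxy : x = y <;> simp [Matrix.mul_apply, Matrix.diagonal_apply, hf.eq_iff, eq_comm, hxy]

theorem SimpleGraph.isClique_iff_forall_lt_not_adj {V : Type*} [LinearOrder V]
    (G : SimpleGraph V) (s : Set V) :
    G.IsClique s ↔ ∀ i j, i < j → ¬G.Adj i j → ¬(i ∈ s ∧ j ∈ s) := by
  refine ⟨fun h i j hij hadj ⟨hi, hj⟩ => hadj (h hi hj hij.ne), fun h i hi j hj hij => ?_⟩
  by_contra hadj
  rcases hij.lt_or_gt with hij | hji
  · exact h i j hij hadj ⟨hi, hj⟩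
  · exact h j i hji (fun hadj' => hadj hadj'.symm) ⟨hj, hi⟩

theorem SimpleGraph.prod_one_sub_boole_nonadj_eq_boole_isClique {V R : Type*} [Fintype V]
    [LinearOrder V] [CommRing R] (G : SimpleGraph V) [DecidableRel G.Adj] (z : V → Bool)
    [Decidable (G.IsClique {i | z i = true})] :
    ∏ p ∈ Finset.univ.filter (fun p : V × V => p.1 < p.2 ∧ ¬G.Adj p.1 p.2),
        (1 - if z p.1 = true ∧ z p.2 = true then (1 : R) else 0) =
      if G.IsClique {i | z i = true} then 1 else 0 := by
  set nonadj := Finset.univ.filter (fun p : V × V => p.1 < p.2 ∧ ¬G.Adj p.1 p.2)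
  have hiff : (∀ p ∈ nonadj, ¬(z p.1 = true ∧ z p.2 = true)) ↔ G.IsClique {i | z i = true} := by
    simp only [nonadj, Finset.mem_filter, Finset.mem_univ, true_and,
      G.isClique_iff_forall_lt_not_adj, Set.mem_ofPred_eq, Prod.forall, and_imp]
  split_ifs with hcl
  · exact Finset.prod_eq_one fun p hp => by simp [hiff.2 hcl p hp]
  · obtain ⟨p, hp, hz⟩ : ∃ p ∈ nonadj, z p.1 = true ∧ z p.2 = true := by
      simpa using mt hiff.1 hcl
    exact Finset.prod_eq_zero hp (by simp [hz])

theorem ZMod.natCast_eq_natCast_iff_of_lt {a b c : ℕ} (ha : a < c) (hb : b < c) :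
    (a : ZMod c) = b ↔ a = b := by
  rw [ZMod.natCast_eq_natCast_iff', Nat.mod_eq_of_lt ha, Nat.mod_eq_of_lt hb]

theorem kclique_constraint_hamiltonian (n m : ℕ) (hnm : n < 2 ^ m)
    (G : SimpleGraph (Fin n)) [DecidableRel G.Adj] (k : ℕ) (hk : k ≤ n) :
    let P : Fin n × Fin n → Matrix (Fin n → Bool) (Fin n → Bool) ℂ := fun p =>
      Matrix.diagonal (fun z => if z p.1 = true ∧ z p.2 = true then 1 else 0)
    let pairs : Finset (Fin n × Fin n) :=
      Finset.univ.filter (fun p : Fin n × Fin n => p.1 < p.2 ∧ ¬ G.Adj p.1 p.2)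
    let Ccliques : Matrix (Fin n → Bool) (Fin n → Bool) ℂ :=
      pairs.noncommProd (fun p => 1 - P p) (by
        intro a _ b _ _
        exact (Commute.one_left _).sub_left ((Commute.one_right _).sub_right
          (by
            show _ * _ = _ * _
            try dsimp only
            rw [Matrix.diagonal_mul_diagonal, Matrix.diagonal_mul_diagonal]
            exact congrArg Matrix.diagonal (funext fun i => mul_comm _ _))))
    let wH : (Fin n → Bool) → ℕ := fun z => (Finset.univ.filter (fun i => z i = true)).card
    let π : ((Fin n → Bool) × ZMod (2 ^ m)) → ((Fin n → Bool) × ZMod (2 ^ m)) :=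
      fun p => (p.1, p.2 + (wH p.1 : ZMod (2 ^ m)))
    let DH : Matrix ((Fin n → Bool) × ZMod (2 ^ m)) ((Fin n → Bool) × ZMod (2 ^ m)) ℂ :=
      Matrix.of (fun x y => if x = π y then 1 else 0)
    let Pk : Matrix ((Fin n → Bool) × ZMod (2 ^ m)) ((Fin n → Bool) × ZMod (2 ^ m)) ℂ :=
      Matrix.diagonal (fun p => if p.2 = (k : ZMod (2 ^ m)) then 1 else 0)
    let C : Matrix ((Fin n → Bool) × ZMod (2 ^ m)) ((Fin n → Bool) × ZMod (2 ^ m)) ℂ :=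
      (DHᴴ * Pk * DH) * (Ccliques ⊗ₖ (1 : Matrix (ZMod (2 ^ m)) (ZMod (2 ^ m)) ℂ))
    ∀ z : Fin n → Bool,
      ((G.IsClique {i : Fin n | z i = true} ∧ wH z = k) →
        C *ᵥ (Pi.single (z, 0) 1 : ((Fin n → Bool) × ZMod (2 ^ m)) → ℂ) =
          Pi.single (z, 0) 1) ∧
      (¬ (G.IsClique {i : Fin n | z i = true} ∧ wH z = k) →
        C *ᵥ (Pi.single (z, 0) 1 : ((Fin n → Bool) × ZMod (2 ^ m)) → ℂ) = 0) := by
  intro P pairs Ccliques wH π DH Pk C z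
  classical
  have hπ : Function.Injective π :=
    (Equiv.prodShear (Equiv.refl _) fun w => Equiv.addRight (wH w : ZMod (2 ^ m))).injective
  have hCcliques : Ccliques =
      diagonal (∏ p ∈ pairs, fun w => 1 - if w p.1 = true ∧ w p.2 = true then 1 else 0) :=
    noncommProd_eq_diagonal_prod _ _ _ (fun p _ => by simp only [P, ← diagonal_one, diagonal_sub]) _
  have hC : C = diagonal fun x => (if x.2 + (wH x.1 : ZMod (2 ^ m)) = k then 1 else 0) *
      ((∏ p ∈ pairs, fun w => 1 - if w p.1 = true ∧ w p.2 = true then 1 else 0) x.1 * 1) := by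
    simp only [C, DH, Pk, hCcliques, conjTranspose_mul_diagonal_mul_of_injective hπ,
      ← diagonal_one, diagonal_kronecker_diagonal, diagonal_mul_diagonal]
    rfl
  have hclique : (∏ p ∈ pairs, fun w => 1 - if w p.1 = true ∧ w p.2 = true then (1 : ℂ) else 0) z =
      if G.IsClique {i | z i = true} then 1 else 0 := by
    rw [Finset.prod_apply]
    exact G.prod_one_sub_boole_nonadj_eq_boole_isClique z
  have hweight : (wH z : ZMod (2 ^ m)) = k ↔ wH z = k :=
    ZMod.natCast_eq_natCast_iff_of_lt ((Finset.card_filter_le _ _).trans_lt (by simpa using hnm))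
      (hk.trans_lt hnm)
  rw [hC, diagonal_mulVec_single]
  simp only [zero_add, hclique, hweight, mul_one]
  split_ifs <;> simp_all
end
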